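/- For the constructed sequence (n_k)_{k≥1}, let a, b be positive integers with a = 2^r·b for some integer r ≥ 1, and set N_I := max Δ_I. For each pair (i,m) there is exactly one integer c = c(i,m) such that every pair (k,ℓ) with k, k+r ∈ Δ_i^{(m)} and ℓ = k+r satisfies a·n_k − b·n_ℓ = c(i,m), and the number of such pairs is at most #Δ_i^{(m)}; moreover, for sufficiently large i these values c(i,m) are pairwise distinct across different pairs (i,m), so that sup_{c ∈ ℤ} Σ_{i=1}^I Σ_{m=1}^{M(i)} #{(k,ℓ) : k, ℓ ∈ Δ_i^{(m)}, ℓ = k + r, a·n_k − b·n_ℓ = c} = O(max_{i ≤ I, m ≤ M(i)} #Δ_i^{(m)}) = O(N_I/g_{N_I}). -/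

import Mathlib

/-!
For `k, k + r` in the same sub-block `Δ_i^{(m)}` the powers `2^{k+im}` cancel in
`a·n_k − b·n_{k+r}` because `a = 2^r b`, leaving `c(i,m) = b(2^r − 1)·2^{e_i}·m` with
`e_i = 2^{2^{2^i}}`. Since `m ≤ M(i) < 2^{3^{i+1}}` and `e_i + 3^{i+1} ≤ e_{i+1}`, the map
`(i, m) ↦ 2^{e_i} m` is injective, so a given `c` is attained in at most one sub-block, and the
count is bounded by the size of one sub-block, `≈ #Δ_i / g(#Δ_i) + 1 ≤ 2 N_I / g(N_I)`.
-/

open Filter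

/-- The block `Δ_i = {2^{3^i−1}, …, 2^{3^{i+1}−1} − 1}`. -/
def Blk (i : ℕ) : Finset ℕ := Finset.Ico (2^(3^i - 1)) (2^(3^(i+1) - 1))

/-- `M(i) = ⌈g(#Δ_i)⌉`. -/
noncomputable def Mblk (g : ℕ → ℝ) (i : ℕ) : ℕ := ⌈g ((Blk i).card)⌉₊

/-- `N_I = max Δ_I = 2^{3^{I+1}−1} − 1`. -/
def Nmax (i : ℕ) : ℕ := 2^(3^(i+1) - 1) - 1

open Finset

lemma sum_le_of_subsingleton_support {ι M : Type*} [AddCommMonoid M] [PartialOrder M]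
    [IsOrderedAddMonoid M] {s : Finset ι} {f : ι → M} {B : M}
    (hf : ∀ x ∈ s, ∀ y ∈ s, f x ≠ 0 → f y ≠ 0 → x = y) (hB : ∀ x ∈ s, f x ≤ B)
    (hB0 : 0 ≤ B) :
    ∑ x ∈ s, f x ≤ B := by
  by_cases h : ∃ x ∈ s, f x ≠ 0
  · obtain ⟨x, hx, hfx⟩ := h
    rw [sum_eq_single_of_mem x hx fun y hy hyx => by_contra fun hfy => hyx (hf y hy x hx hfy hfx)]
    exact hB x hx
  · push Not at h
    rw [sum_eq_zero h]
    exact hB0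

lemma sum_sum_le_of_subsingleton_support {ι κ M : Type*} [AddCommMonoid M] [PartialOrder M]
    [IsOrderedAddMonoid M] {s : Finset ι} {t : ι → Finset κ} {f : ι → κ → M} {B : M}
    (hf : ∀ i ∈ s, ∀ j ∈ t i, ∀ i' ∈ s, ∀ j' ∈ t i',
      f i j ≠ 0 → f i' j' ≠ 0 → i = i' ∧ j = j')
    (hB : ∀ i ∈ s, ∀ j ∈ t i, f i j ≤ B) (hB0 : 0 ≤ B) :
    ∑ i ∈ s, ∑ j ∈ t i, f i j ≤ B := by
  rw [sum_sigma']
  refine sum_le_of_subsingleton_support ?_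
    (fun x hx => hB _ (mem_sigma.1 hx).1 _ (mem_sigma.1 hx).2) hB0
  rintro ⟨i, j⟩ hx ⟨i', j'⟩ hy hfx hfy
  rw [mem_sigma] at hx hy
  obtain ⟨rfl, rfl⟩ := hf i hx.1 j hx.2 i' hy.1 j' hy.2 hfx hfy
  rfl

lemma card_filter_graph_le {α : Type*} [DecidableEq α] (s : Finset α) (f : α → α)
    (P : α × α → Prop) [DecidablePred P] :
    ((s ×ˢ s).filter (fun p => p.2 = f p.1 ∧ P p)).card ≤ s.card := by
  refine card_le_card_of_injOn Prod.fst (fun p hp => ?_) fun p hp q hq hpq => ?_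
  · exact (mem_product.1 (mem_filter.1 hp).1).1
  · rw [coe_filter, Set.mem_ofPred_eq] at hp hq
    exact Prod.ext hpq (by rw [hp.2.1, hq.2.1, hpq])

lemma eq_of_card_filter_ne_zero {s : Finset ℕ} {r : ℕ} {F : ℕ → ℕ → ℤ} {v c : ℤ}
    (hF : ∀ k, k ∈ s → k + r ∈ s → F k (k + r) = v)
    (h : ((s ×ˢ s).filter (fun p => p.2 = p.1 + r ∧ F p.1 p.2 = c)).card ≠ 0) : v = c := by
  obtain ⟨⟨k, l⟩, hp⟩ := card_ne_zero.1 h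
  obtain ⟨hkl, rfl, rfl⟩ : (k ∈ s ∧ l ∈ s) ∧ l = k + r ∧ _ := by
    simpa only [mem_filter, mem_product] using hp
  exact (hF k hkl.1 hkl.2).symm

lemma card_mul_card_le_card_biUnion_add {ι α : Type*} [DecidableEq α] {t : Finset ι}
    {f : ι → Finset α} (hdisj : (t : Set ι).PairwiseDisjoint f)
    (hbal : ∀ j ∈ t, ∀ j' ∈ t, (f j).card ≤ (f j').card + 1) {j : ι} (hj : j ∈ t) :
    t.card * (f j).card ≤ (t.biUnion f).card + t.card := by
  calc t.card * (f j).card = ∑ _j' ∈ t, (f j).card := by rw [sum_const, smul_eq_mul]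
    _ ≤ ∑ j' ∈ t, ((f j').card + 1) := sum_le_sum fun j' hj' => hbal j hj j' hj'
    _ = (t.biUnion f).card + t.card := by
      rw [sum_add_distrib, card_biUnion hdisj, sum_const, smul_eq_mul, mul_one]

lemma two_pow_mul_lt_two_pow_mul {e d e' m m' : ℕ} (hgap : e + d ≤ e') (hm : m < 2 ^ d)
    (hm' : 1 ≤ m') : 2 ^ e * m < 2 ^ e' * m' :=
  calc 2 ^ e * m < 2 ^ e * 2 ^ d := Nat.mul_lt_mul_of_pos_left hm (by positivity)
    _ = 2 ^ (e + d) := (pow_add 2 e d).symm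
    _ ≤ 2 ^ e' := Nat.pow_le_pow_right (by norm_num) hgap
    _ ≤ 2 ^ e' * m' := Nat.le_mul_of_pos_right _ hm'

lemma injOn_two_pow_mul {e d : ℕ → ℕ} (hgap : ∀ i i', i < i' → e i + d i ≤ e i') :
    Set.InjOn (fun p : ℕ × ℕ => 2 ^ e p.1 * p.2) {p | 1 ≤ p.2 ∧ p.2 < 2 ^ d p.1} := by
  rintro ⟨i, m⟩ ⟨hm1, hm⟩ ⟨i', m'⟩ ⟨hm1', hm'⟩ heq
  dsimp only at heq hm hm' hm1 hm1'
  rcases lt_trichotomy i i' with h | rfl | h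
  · exact absurd heq (two_pow_mul_lt_two_pow_mul (hgap i i' h) hm hm1').ne
  · rw [Nat.eq_of_mul_eq_mul_left (by positivity) heq]
  · exact absurd heq (two_pow_mul_lt_two_pow_mul (hgap i' i h) hm' hm1).ne'

lemma two_pow_two_pow_add_three_pow_le (i : ℕ) :
    2 ^ 2 ^ 2 ^ i + 3 ^ (i + 1) ≤ 2 ^ 2 ^ 2 ^ (i + 1) := by
  set x := 2 ^ 2 ^ i with hx
  have hi : i + 1 ≤ 2 ^ i := Nat.lt_two_pow_self
  have hx2 : 2 ≤ x := Nat.le_self_pow (by positivity) 2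
  have hsq : 2 ^ 2 ^ (i + 1) = x * x := by rw [hx, pow_succ, pow_mul, sq]
  have hlin : 2 * (i + 1) ≤ x :=
    calc 2 * (i + 1) ≤ 2 ^ (i + 1) := by rw [pow_succ']; omega
      _ ≤ x := Nat.pow_le_pow_right (by norm_num) hi
  have h3 : 3 ^ (i + 1) ≤ 2 ^ x :=
    calc 3 ^ (i + 1) ≤ 4 ^ (i + 1) := Nat.pow_le_pow_left (by norm_num) _
      _ = 2 ^ (2 * (i + 1)) := by rw [pow_mul]; norm_num
      _ ≤ 2 ^ x := Nat.pow_le_pow_right (by norm_num) hlin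
  calc 2 ^ x + 3 ^ (i + 1) ≤ 2 ^ (x + 1) := by rw [pow_succ]; omega
    _ ≤ 2 ^ 2 ^ 2 ^ (i + 1) := Nat.pow_le_pow_right (by norm_num) (by rw [hsq]; nlinarith)

lemma two_pow_two_pow_add_three_pow_le_of_lt {i i' : ℕ} (h : i < i') :
    2 ^ 2 ^ 2 ^ i + 3 ^ (i + 1) ≤ 2 ^ 2 ^ 2 ^ i' :=
  (two_pow_two_pow_add_three_pow_le i).trans <| Nat.pow_le_pow_right (by norm_num) <|
    Nat.pow_le_pow_right (by norm_num) <| Nat.pow_le_pow_right (by norm_num) h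

lemma card_Blk_pos (i : ℕ) : 1 ≤ (Blk i).card := by
  rw [Blk, Nat.card_Ico]
  have : 2 ^ (3 ^ i - 1) < 2 ^ (3 ^ (i + 1) - 1) := Nat.pow_lt_pow_right (by norm_num) <| by
    have := Nat.one_le_pow i 3 (by norm_num)
    have := Nat.pow_lt_pow_right (a := 3) (by norm_num) (Nat.lt_succ_self i)
    omega
  omega

lemma card_Blk_lt (i : ℕ) : (Blk i).card < 2 ^ 3 ^ (i + 1) := by
  rw [Blk, Nat.card_Ico]
  have : 2 ^ (3 ^ (i + 1) - 1) < 2 ^ 3 ^ (i + 1) :=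
    Nat.pow_lt_pow_right (by norm_num) (Nat.sub_lt (by positivity) one_pos)
  exact (Nat.sub_le _ _).trans_lt this

lemma card_Blk_le_Nmax {i I : ℕ} (h : i ≤ I) : (Blk i).card ≤ Nmax I := by
  rw [Blk, Nat.card_Ico, Nmax]
  have : 2 ^ (3 ^ (i + 1) - 1) ≤ 2 ^ (3 ^ (I + 1) - 1) := Nat.pow_le_pow_right (by norm_num) <|
    Nat.sub_le_sub_right (Nat.pow_le_pow_right (by norm_num) (by omega)) 1
  have : 1 ≤ 2 ^ (3 ^ i - 1) := Nat.one_le_two_pow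
  omega

section Mblk

variable {g : ℕ → ℝ}

lemma one_le_Mblk (hg_bounds : ∀ N : ℕ, 1 ≤ N → 1 ≤ g N ∧ g N ≤ N) (i : ℕ) :
    1 ≤ Mblk g i :=
  Nat.one_le_ceil_iff.2 <| one_pos.trans_le (hg_bounds _ (card_Blk_pos i)).1

lemma Mblk_le_card (hg_bounds : ∀ N : ℕ, 1 ≤ N → 1 ≤ g N ∧ g N ≤ N) (i : ℕ) :
    Mblk g i ≤ (Blk i).card :=
  Nat.ceil_le.2 (hg_bounds _ (card_Blk_pos i)).2

lemma lt_of_mem_Icc_Mblk (hg_bounds : ∀ N : ℕ, 1 ≤ N → 1 ≤ g N ∧ g N ≤ N) {i m : ℕ}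
    (hm : m ∈ Icc 1 (Mblk g i)) : 1 ≤ m ∧ m < 2 ^ 3 ^ (i + 1) :=
  ⟨(mem_Icc.1 hm).1,
    ((mem_Icc.1 hm).2.trans (Mblk_le_card hg_bounds i)).trans_lt (card_Blk_lt i)⟩

lemma div_le_div_of_ratio_step
    (hg_ratio_mono : ∀ N : ℕ, 1 ≤ N → (N : ℝ) / g N ≤ ((N : ℝ) + 1) / g (N + 1))
    {A B : ℕ} (hA : 1 ≤ A) (hAB : A ≤ B) : (A : ℝ) / g A ≤ B / g B :=
  monotoneOn_nat_Ici_of_le_succ (f := fun N : ℕ => (N : ℝ) / g N)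
    (fun N hN => by simpa using hg_ratio_mono N hN) hA (hA.trans hAB) hAB

end Mblk

/-- The value `c(i, m)` taken by `a·n_k − b·n_{k+r}` on the sub-block `Δ_i^{(m)}`. -/
def blockValue (b r i m : ℕ) : ℤ := b * (2 ^ r - 1) * (2 ^ 2 ^ 2 ^ 2 ^ i * m : ℕ)

lemma sub_eq_blockValue {n : ℕ → ℕ} {s : Finset ℕ} {a b r i m k : ℕ}
    (hn : ∀ k ∈ s, n k = 2 ^ 2 ^ 2 ^ 2 ^ i * (2 ^ (k + i * m) + m)) (hab : a = 2 ^ r * b)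
    (hk : k ∈ s) (hkr : k + r ∈ s) :
    (a : ℤ) * n k - b * n (k + r) = blockValue b r i m := by
  rw [hn k hk, hn (k + r) hkr, hab, blockValue, add_right_comm k r, pow_add]
  push_cast
  ring

lemma blockValue_injOn {b r : ℕ} (hb : 1 ≤ b) (hr : 1 ≤ r) :
    Set.InjOn (fun p : ℕ × ℕ => blockValue b r p.1 p.2)
      {p | 1 ≤ p.2 ∧ p.2 < 2 ^ 3 ^ (p.1 + 1)} := by
  have hK : (b : ℤ) * (2 ^ r - 1) ≠ 0 := mul_ne_zero (by positivity) <|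
    sub_ne_zero.2 (one_lt_pow₀ (by norm_num) (by omega)).ne'
  intro p hp q hq heq
  refine injOn_two_pow_mul (e := fun i => 2 ^ 2 ^ 2 ^ i) (d := fun i => 3 ^ (i + 1))
    (fun _ _ => two_pow_two_pow_add_three_pow_le_of_lt) hp hq ?_
  exact_mod_cast mul_left_cancel₀ hK heq

section Subblocks

variable {g : ℕ → ℝ} {blk : ℕ → ℕ → Finset ℕ}

lemma Mblk_mul_card_blk_le
    (hcover : ∀ i k, k ∈ Blk i ↔ ∃ m, m ∈ Icc 1 (Mblk g i) ∧ k ∈ blk i m)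
    (hdisj : ∀ i m m', m ≠ m' → Disjoint (blk i m) (blk i m'))
    (hcard : ∀ i, ∀ m ∈ Icc 1 (Mblk g i), ∀ m' ∈ Icc 1 (Mblk g i),
      (blk i m).card ≤ (blk i m').card + 1)
    {i m : ℕ} (hm : m ∈ Icc 1 (Mblk g i)) :
    Mblk g i * (blk i m).card ≤ (Blk i).card + Mblk g i := by
  have hunion : (Icc 1 (Mblk g i)).biUnion (blk i) = Blk i := by
    ext k
    rw [mem_biUnion, hcover]
  simpa [hunion] using card_mul_card_le_card_biUnion_add (fun m _ m' _ h => hdisj i m m' h)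
    (hcard i) hm

lemma card_blk_le_two_mul_Nmax_div
    (hg_bounds : ∀ N : ℕ, 1 ≤ N → 1 ≤ g N ∧ g N ≤ N)
    (hg_ratio_mono : ∀ N : ℕ, 1 ≤ N → (N : ℝ) / g N ≤ ((N : ℝ) + 1) / g (N + 1))
    (hcover : ∀ i k, k ∈ Blk i ↔ ∃ m, m ∈ Icc 1 (Mblk g i) ∧ k ∈ blk i m)
    (hdisj : ∀ i m m', m ≠ m' → Disjoint (blk i m) (blk i m'))
    (hcard : ∀ i, ∀ m ∈ Icc 1 (Mblk g i), ∀ m' ∈ Icc 1 (Mblk g i),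
      (blk i m).card ≤ (blk i m').card + 1)
    {i I m : ℕ} (hiI : i ≤ I) (hm : m ∈ Icc 1 (Mblk g i)) :
    ((blk i m).card : ℝ) ≤ 2 * Nmax I / g (Nmax I) := by
  set B := (Blk i).card
  set N := Nmax I
  have hB : 1 ≤ B := card_Blk_pos i
  have hBN : B ≤ N := card_Blk_le_Nmax hiI
  have hgB := hg_bounds B hB
  have hgN := hg_bounds N (hB.trans hBN)
  have hM : (0 : ℝ) < Mblk g i := by exact_mod_cast one_le_Mblk hg_bounds i
  have hgM : g B ≤ Mblk g i := Nat.le_ceil _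
  have hRN : (1 : ℝ) ≤ N / g N := (one_le_div₀ (by linarith)).2 hgN.2
  have hcount : ((Mblk g i : ℕ) : ℝ) * (blk i m).card ≤ B + Mblk g i := by
    exact_mod_cast Mblk_mul_card_blk_le hcover hdisj hcard hm
  calc ((blk i m).card : ℝ) ≤ B / Mblk g i + 1 := by
        rw [div_add_one hM.ne', le_div_iff₀ hM]; linarith
    _ ≤ B / g B + 1 := by gcongr; linarith
    _ ≤ N / g N + 1 := by linarith [div_le_div_of_ratio_step hg_ratio_mono hB hBN]
    _ ≤ 2 * N / g N := by rw [mul_div_assoc]; linarith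

end Subblocks

theorem statement14_general
    (g : ℕ → ℝ)
    (hg_bounds : ∀ N : ℕ, 1 ≤ N → 1 ≤ g N ∧ g N ≤ N)
    (hg_ratio_mono : ∀ N : ℕ, 1 ≤ N → (N : ℝ) / g N ≤ ((N:ℝ)+1) / g (N+1))
    (blk : ℕ → ℕ → Finset ℕ)
    (hcover : ∀ i k, k ∈ Blk i ↔ ∃ m, m ∈ Finset.Icc 1 (Mblk g i) ∧ k ∈ blk i m)
    (hdisj : ∀ i m m', m ≠ m' → Disjoint (blk i m) (blk i m'))
    (hcard : ∀ i, ∀ m ∈ Finset.Icc 1 (Mblk g i), ∀ m' ∈ Finset.Icc 1 (Mblk g i),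
      (blk i m).card ≤ (blk i m').card + 1)
    (n : ℕ → ℕ)
    (hn : ∀ i, ∀ m ∈ Finset.Icc 1 (Mblk g i), ∀ k ∈ blk i m,
      n k = 2^(2^(2^(2^i))) * (2^(k + i*m) + m))
    (a b r : ℕ) (hb : 1 ≤ b) (hr : 1 ≤ r) (hab : a = 2^r * b) :
    -- (1) for each (i,m) there is a single value c(i,m) taken by a·n_k − b·n_{k+r}
    -- on all pairs (k, k+r) with k, k+r ∈ Δ_i^{(m)}
    (∀ i, ∀ m ∈ Finset.Icc 1 (Mblk g i), ∃ c : ℤ,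
      ∀ k, k ∈ blk i m → k + r ∈ blk i m →
        (a : ℤ) * n k - (b : ℤ) * n (k + r) = c) ∧
    -- (2) the number of such pairs is at most #Δ_i^{(m)}
    (∀ i m, ((blk i m).filter (fun k => k + r ∈ blk i m)).card ≤ (blk i m).card) ∧
    -- (3) for sufficiently large block indices, the values c(i,m) are pairwise
    -- distinct across different pairs (i,m)
    (∃ i₀ : ℕ, ∀ i i' : ℕ, i₀ ≤ i → i₀ ≤ i' →
      ∀ m m' : ℕ, m ∈ Finset.Icc 1 (Mblk g i) → m' ∈ Finset.Icc 1 (Mblk g i') →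
        (i, m) ≠ (i', m') →
        ∀ k k' : ℕ, k ∈ blk i m → k + r ∈ blk i m →
          k' ∈ blk i' m' → k' + r ∈ blk i' m' →
          (a : ℤ) * n k - (b : ℤ) * n (k + r) ≠
            (a : ℤ) * n k' - (b : ℤ) * n (k' + r)) ∧
    -- (4) consequently the total count is O(max #Δ_i^{(m)}) = O(N_I / g_{N_I})
    (∃ C : ℝ, ∀ I : ℕ, 1 ≤ I → ∀ c : ℤ,
      ((∑ i ∈ Finset.Icc 1 I, ∑ m ∈ Finset.Icc 1 (Mblk g i),
        ((blk i m ×ˢ blk i m).filter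
          (fun p => p.2 = p.1 + r ∧ (a : ℤ) * n p.1 - (b : ℤ) * n p.2 = c)).card : ℕ) : ℝ)
        ≤ C * (Nmax I) / g (Nmax I)) := by
  have hval : ∀ i, ∀ m ∈ Icc 1 (Mblk g i), ∀ k, k ∈ blk i m → k + r ∈ blk i m →
      (a : ℤ) * n k - b * n (k + r) = blockValue b r i m :=
    fun i m hm _ => sub_eq_blockValue (hn i m hm) hab
  have hinj : ∀ i i' m m', m ∈ Icc 1 (Mblk g i) → m' ∈ Icc 1 (Mblk g i') →
      blockValue b r i m = blockValue b r i' m' → (i, m) = (i', m') := fun i i' m m' hm hm' =>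
    @blockValue_injOn b r hb hr (i, m) (lt_of_mem_Icc_Mblk hg_bounds hm) (i', m')
      (lt_of_mem_Icc_Mblk hg_bounds hm')
  refine ⟨fun i m hm => ⟨_, hval i m hm⟩, fun i m => card_filter_le _ _, ⟨0, ?_⟩,
    ⟨2, ?_⟩⟩
  · intro i i' _ _ m m' hm hm' hne k k' hk hkr hk' hkr' h
    rw [hval i m hm k hk hkr, hval i' m' hm' k' hk' hkr'] at h
    exact hne (hinj i i' m m' hm hm' h)
  · intro I _ c
    have hN : 1 ≤ g (Nmax I) :=
      (hg_bounds _ ((card_Blk_pos I).trans (card_Blk_le_Nmax le_rfl))).1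
    push_cast
    refine sum_sum_le_of_subsingleton_support ?_ (fun i hi m hm => ?_)
      (div_nonneg (by positivity) (by linarith))
    · intro i _ m hm i' _ m' hm' hne hne'
      refine Prod.ext_iff.1 <| hinj i i' m m' hm hm' ?_
      rw [eq_of_card_filter_ne_zero (F := fun k l => (a : ℤ) * n k - b * n l) (hval i m hm)
          (Nat.cast_ne_zero.1 hne),
        eq_of_card_filter_ne_zero (F := fun k l => (a : ℤ) * n k - b * n l) (hval i' m' hm')
          (Nat.cast_ne_zero.1 hne')]
    · exact (Nat.cast_le.2 (card_filter_graph_le (blk i m) (· + r)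
        (fun p => (a : ℤ) * n p.1 - (b : ℤ) * n p.2 = c))).trans
        (card_blk_le_two_mul_Nmax_div hg_bounds hg_ratio_mono hcover hdisj hcard
          (mem_Icc.1 hi).2 hm)

theorem statement14
    (g : ℕ → ℝ)
    (hg_bounds : ∀ N : ℕ, 1 ≤ N → 1 ≤ g N ∧ g N ≤ N)
    (hg_mono : ∀ N : ℕ, 1 ≤ N → g N ≤ g (N+1))
    (hg_ratio_mono : ∀ N : ℕ, 1 ≤ N → (N : ℝ) / g N ≤ ((N:ℝ)+1) / g (N+1))
    (hg_top : Tendsto g atTop atTop)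
    (hg_ratio_top : Tendsto (fun N : ℕ => (N : ℝ) / g N) atTop atTop)
    (blk : ℕ → ℕ → Finset ℕ)
    (hcover : ∀ i k, k ∈ Blk i ↔ ∃ m, m ∈ Finset.Icc 1 (Mblk g i) ∧ k ∈ blk i m)
    (hdisj : ∀ i m m', m ≠ m' → Disjoint (blk i m) (blk i m'))
    (hconsec : ∀ i m m', m < m' → ∀ k ∈ blk i m, ∀ k' ∈ blk i m', k < k')
    (hcard : ∀ i, ∀ m ∈ Finset.Icc 1 (Mblk g i), ∀ m' ∈ Finset.Icc 1 (Mblk g i),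
      (blk i m).card ≤ (blk i m').card + 1)
    (n : ℕ → ℕ)
    (hn : ∀ i, ∀ m ∈ Finset.Icc 1 (Mblk g i), ∀ k ∈ blk i m,
      n k = 2^(2^(2^(2^i))) * (2^(k + i*m) + m))
    (a b r : ℕ) (hb : 1 ≤ b) (hr : 1 ≤ r) (hab : a = 2^r * b) :
    -- (1) for each (i,m) there is a single value c(i,m) taken by a·n_k − b·n_{k+r}
    -- on all pairs (k, k+r) with k, k+r ∈ Δ_i^{(m)}
    (∀ i, ∀ m ∈ Finset.Icc 1 (Mblk g i), ∃ c : ℤ,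
      ∀ k, k ∈ blk i m → k + r ∈ blk i m →
        (a : ℤ) * n k - (b : ℤ) * n (k + r) = c) ∧
    -- (2) the number of such pairs is at most #Δ_i^{(m)}
    (∀ i m, ((blk i m).filter (fun k => k + r ∈ blk i m)).card ≤ (blk i m).card) ∧
    -- (3) for sufficiently large block indices, the values c(i,m) are pairwise
    -- distinct across different pairs (i,m)
    (∃ i₀ : ℕ, ∀ i i' : ℕ, i₀ ≤ i → i₀ ≤ i' →
      ∀ m m' : ℕ, m ∈ Finset.Icc 1 (Mblk g i) → m' ∈ Finset.Icc 1 (Mblk g i') →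
        (i, m) ≠ (i', m') →
        ∀ k k' : ℕ, k ∈ blk i m → k + r ∈ blk i m →
          k' ∈ blk i' m' → k' + r ∈ blk i' m' →
          (a : ℤ) * n k - (b : ℤ) * n (k + r) ≠
            (a : ℤ) * n k' - (b : ℤ) * n (k' + r)) ∧
    -- (4) consequently the total count is O(max #Δ_i^{(m)}) = O(N_I / g_{N_I})
    (∃ C : ℝ, ∀ I : ℕ, 1 ≤ I → ∀ c : ℤ,
      ((∑ i ∈ Finset.Icc 1 I, ∑ m ∈ Finset.Icc 1 (Mblk g i),
        ((blk i m ×ˢ blk i m).filter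
          (fun p => p.2 = p.1 + r ∧ (a : ℤ) * n p.1 - (b : ℤ) * n p.2 = c)).card : ℕ) : ℝ)
        ≤ C * (Nmax I) / g (Nmax I)) :=
  statement14_general g hg_bounds hg_ratio_mono blk hcover hdisj hcard n hn a b r hb hr hab
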